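/- arXiv:1806.04917 — 2 statements merged into one kernel-verified Lean document; each statement's English description precedes it below -/
import Mathlib

section
/- For all positive integers n and c, there exists a least integer k with the following property: for any pairwise disjoint nonempty finite sets A₀, ..., A_{k-1} ⊆ ℕ and any c-coloring of NU{A₀,...,A_{k-1}}, there exist pairwise disjoint sets d₀, ..., d_{n-1}, each in NU{A₀,...,A_{k-1}}, such that NU{d₀,...,d_{n-1}} is monochromatic. (This least k is denoted U(n,c).) -/
open Finset Function

/-- `UProp n c k`: any `c`-coloring of the nonempty unions of `k` pairwise disjoint
nonempty finite sets admits `n` pairwise disjoint elements of those unions whose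
nonempty unions are monochromatic. -/
def UProp (n c k : ℕ) : Prop :=
  ∀ A : Fin k → Finset ℕ, (∀ i, (A i).Nonempty) →
    (∀ i j, i ≠ j → Disjoint (A i) (A j)) →
    ∀ chi : Finset ℕ → Fin c,
      ∃ d : Fin n → Finset ℕ,
        (∀ i j, i ≠ j → Disjoint (d i) (d j)) ∧
        (∀ i, ∃ I : Finset (Fin k), I.Nonempty ∧ d i = I.biUnion A) ∧
        ∃ col : Fin c, ∀ J : Finset (Fin n), J.Nonempty → chi (J.biUnion d) = col

/-!
Identify a natural number with its set of binary digits. Coloring `m` by the color of that set,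
Hindman's theorem yields a sequence `b` all of whose finite sums share one color. Grouping the
terms of `b` into disjoint blocks whose sums are divisible by larger and larger powers of two
(Erdős–Ginzburg–Ziv), the block sums have pairwise disjoint binary supports, so sums of distinct
block sums correspond to unions of supports: this is the infinite finite-unions theorem.
An ultrafilter limit of colorings turns it into the finitary statement, and the least `k` exists
by well-ordering.
-/

namespace Nat

lemma toFinset_bitIndices_nonempty {m : ℕ} (hm : m ≠ 0) : m.bitIndices.toFinset.Nonempty := by
  refine nonempty_iff_ne_empty.2 fun h => hm ?_
  rw [← Finset.sum_toFinset_bitIndices_two_pow m, h, sum_empty]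

lemma disjoint_bitIndices_of_lt_of_dvd {a b t : ℕ} (ha : a < 2 ^ t) (hb : 2 ^ t ∣ b) :
    Disjoint a.bitIndices.toFinset b.bitIndices.toFinset := by
  obtain ⟨q, rfl⟩ := hb
  refine disjoint_left.2 fun i hia hib => ?_
  have hit : i < t := (Nat.pow_lt_pow_iff_right (by norm_num)).1
    ((two_pow_le_of_mem_bitIndices (List.mem_toFinset.1 hia)).trans_lt ha)
  simp only [bitIndices_two_pow_mul, List.mem_toFinset, List.mem_map] at hib
  obtain ⟨j, -, rfl⟩ := hib
  omega

lemma toFinset_bitIndices_sum {ι : Type*} [DecidableEq ι] {J : Finset ι} {m : ι → ℕ}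
    (h : (J : Set ι).PairwiseDisjoint fun j => (m j).bitIndices.toFinset) :
    (∑ j ∈ J, m j).bitIndices.toFinset = J.biUnion fun j => (m j).bitIndices.toFinset := by
  calc (∑ j ∈ J, m j).bitIndices.toFinset
      = (∑ j ∈ J, ∑ i ∈ (m j).bitIndices.toFinset, 2 ^ i).bitIndices.toFinset := by
        simp only [Finset.sum_toFinset_bitIndices_two_pow]
    _ = _ := by rw [← sum_biUnion h, Finset.toFinset_bitIndices_sum_two_pow]

end Nat

lemma exists_subset_Ico_two_pow_dvd_sum (f : ℕ → ℕ) (e t : ℕ) :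
    ∃ F ⊆ Ico e (e + 2 ^ (t + 1)), F.Nonempty ∧ 2 ^ t ∣ ∑ i ∈ F, f i := by
  obtain ⟨F, hF, hcard, hdvd⟩ := Int.erdos_ginzburg_ziv (n := 2 ^ t)
    (s := Ico e (e + 2 ^ (t + 1))) (fun i => (f i : ℤ)) (by simp [pow_succ]; omega)
  refine ⟨F, hF, card_pos.1 (hcard ▸ by positivity), ?_⟩
  exact_mod_cast hdvd

noncomputable section Blocks

variable (f : ℕ → ℕ)

def blockStart : ℕ → ℕ
  | 0 => 0
  | j + 1 => blockStart j + 2 ^ (∑ i ∈ range (blockStart j), f i + 1)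

/-- The exponent exceeds every earlier block sum, since those blocks lie below `blockStart f j`. -/
def blockExponent (j : ℕ) : ℕ := ∑ i ∈ range (blockStart f j), f i

def block (j : ℕ) : Finset ℕ :=
  Classical.choose (exists_subset_Ico_two_pow_dvd_sum f (blockStart f j) (blockExponent f j))

def blockSum (j : ℕ) : ℕ := ∑ i ∈ block f j, f i

lemma block_spec (j : ℕ) : block f j ⊆ Ico (blockStart f j) (blockStart f (j + 1)) ∧
    (block f j).Nonempty ∧ 2 ^ blockExponent f j ∣ blockSum f j :=
  Classical.choose_spec (exists_subset_Ico_two_pow_dvd_sum f (blockStart f j) (blockExponent f j))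

lemma monotone_blockStart : Monotone (blockStart f) :=
  monotone_nat_of_le_succ fun _ => Nat.le_add_right _ _

lemma block_subset_range {i j : ℕ} (hij : i < j) : block f i ⊆ range (blockStart f j) :=
  fun _ hx => mem_range.2 <|
    (mem_Ico.1 ((block_spec f i).1 hx)).2.trans_le (monotone_blockStart f hij)

lemma pairwise_disjoint_block : Pairwise (Disjoint on (block f)) := by
  refine (pairwise_disjoint_on _).2 fun i j hij => disjoint_left.2 fun x hxi hxj => ?_
  exact (mem_range.1 (block_subset_range f hij hxi)).not_ge (mem_Ico.1 ((block_spec f j).1 hxj)).1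

lemma pairwise_disjoint_bitIndices_blockSum :
    Pairwise (Disjoint on fun j => (blockSum f j).bitIndices.toFinset) := by
  refine (pairwise_disjoint_on _).2 fun i j hij => Nat.disjoint_bitIndices_of_lt_of_dvd ?_
    (block_spec f j).2.2
  calc blockSum f i ≤ blockExponent f j := sum_le_sum_of_subset (block_subset_range f hij)
    _ < 2 ^ blockExponent f j := Nat.lt_two_pow_self

lemma sum_blockSum (J : Finset ℕ) : ∑ j ∈ J, blockSum f j = ∑ i ∈ J.biUnion (block f), f i :=
  (sum_biUnion fun _ _ _ _ hij => pairwise_disjoint_block f hij).symm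

end Blocks

lemma Hindman.pos_of_mem_FS {a : Stream' ℕ} (ha : ∀ i, 0 < a.get i) {m : ℕ}
    (hm : m ∈ Hindman.FS a) : 0 < m := by
  induction hm with
  | head' a => exact ha 0
  | tail' a m _ ih => exact ih fun i => ha (i + 1)
  | cons' a m _ ih => exact Nat.add_pos_left (ha 0) m

def IsMonoUnionFamily {α ι C : Type*} [DecidableEq α] (chi : Finset α → C) (D : ι → Finset α) :
    Prop :=
  (∀ i, (D i).Nonempty) ∧ Pairwise (Disjoint on D) ∧
    ∃ col, ∀ J : Finset ι, J.Nonempty → chi (J.biUnion D) = col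

lemma IsMonoUnionFamily.comp_injective {α ι ι' C : Type*} [DecidableEq α] [DecidableEq ι]
    {chi : Finset α → C} {D : ι → Finset α} (hD : IsMonoUnionFamily chi D) {g : ι' → ι}
    (hg : g.Injective) : IsMonoUnionFamily chi (D ∘ g) := by
  obtain ⟨hne, hdisj, col, hcol⟩ := hD
  refine ⟨fun i => hne (g i), hdisj.comp_of_injective hg, col, fun J hJ => ?_⟩
  classical
  have := hcol _ (hJ.image g)
  rwa [image_biUnion] at this

theorem exists_isMonoUnionFamily_nat {C : Type*} [Finite C] (chi : Finset ℕ → C) :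
    ∃ D : ℕ → Finset ℕ, IsMonoUnionFamily chi D := by
  let ψ : ℕ → C := fun m => chi m.bitIndices.toFinset
  -- The parts exclude `0`, which forces the terms of the sequence `b` below to be positive.
  have hcov : Hindman.FS (fun _ => 1 : Stream' ℕ) ⊆ ⋃₀ Set.range fun v => {m | 0 < m ∧ ψ m = v} :=
    fun m hm => Set.mem_sUnion.2
      ⟨_, ⟨ψ m, rfl⟩, Hindman.pos_of_mem_FS (fun _ => one_pos) hm, rfl⟩
  obtain ⟨_, ⟨v, rfl⟩, b, hb⟩ := Hindman.FS_partition_regular _ _ (Set.finite_range _) hcov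
  have hb_pos : ∀ i, 0 < b.get i := fun i => (hb (Hindman.FS.singleton b i)).1
  refine ⟨fun j => (blockSum b.get j).bitIndices.toFinset, fun j => ?_,
    pairwise_disjoint_bitIndices_blockSum b.get, v, fun J hJ => ?_⟩
  · exact Nat.toFinset_bitIndices_nonempty
      (sum_pos (fun i _ => hb_pos i) (block_spec b.get j).2.1).ne'
  · rw [← Nat.toFinset_bitIndices_sum
      ((pairwise_disjoint_bitIndices_blockSum b.get).set_pairwise _), sum_blockSum]
    obtain ⟨j, hj⟩ := hJ
    exact (hb (Hindman.FS.finsetSum b _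
      ((block_spec b.get j).2.1.mono (subset_biUnion_of_mem _ hj)))).2

theorem exists_isMonoUnionFamily_subset_range (n : ℕ) (C : Type*) [Finite C] :
    ∃ k, ∀ chi : Finset ℕ → C, ∃ D : Fin n → Finset ℕ,
      IsMonoUnionFamily chi D ∧ ∀ i, D i ⊆ range k := by
  by_contra! hbad
  choose χ hχ using hbad
  let U := Filter.hyperfilter ℕ
  choose chi hchi using fun S => (U.map fun k => χ k S).eq_pure_of_finite
  have hlim (S : Finset ℕ) : ∀ᶠ k in (U : Filter ℕ), χ k S = chi S :=
    Ultrafilter.mem_map.1 (hchi S ▸ rfl : {chi S} ∈ U.map fun k => χ k S)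
  obtain ⟨D, hD⟩ := exists_isMonoUnionFamily_nat chi
  set D' : Fin n → Finset ℕ := D ∘ Fin.val
  obtain ⟨hne, hdisj, col, hcol⟩ := hD.comp_injective Fin.val_injective
  obtain ⟨K, hK⟩ := exists_nat_subset_range (univ.biUnion D')
  have hKU : ∀ᶠ k in (U : Filter ℕ), K ≤ k := Nat.hyperfilter_le_atTop (Filter.eventually_ge_atTop K)
  obtain ⟨k, hKk, hagree⟩ :=
    (hKU.and (Filter.eventually_all.2 fun J : Finset (Fin n) => hlim (J.biUnion D'))).exists
  obtain ⟨i, hi⟩ := hχ k D' ⟨hne, hdisj, col, fun J hJ => (hagree J).trans (hcol J hJ)⟩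
  exact hi ((subset_biUnion_of_mem _ (mem_univ i)).trans (hK.trans (range_subset_range.2 hKk)))

theorem uProp_of_forall_exists_subset_range {n c k : ℕ}
    (hk : ∀ chi : Finset ℕ → Fin c, ∃ D : Fin n → Finset ℕ,
      IsMonoUnionFamily chi D ∧ ∀ i, D i ⊆ range k) : UProp n c k := by
  intro A _ hA chi
  let π : Finset ℕ → Finset (Fin k) := fun S => {x | (x : ℕ) ∈ S}
  obtain ⟨D, ⟨hne, hdisj, col, hcol⟩, hsub⟩ := hk fun S => chi ((π S).biUnion A)
  refine ⟨fun i => (π (D i)).biUnion A, fun i j hij => ?_, fun i => ⟨π (D i), ?_, rfl⟩, col,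
    fun J hJ => ?_⟩
  · refine (disjoint_biUnion_left _ _ _).2 fun x hx =>
      (disjoint_biUnion_right _ _ _).2 fun y hy => hA x y ?_
    rintro rfl
    exact disjoint_left.1 (hdisj hij) (mem_filter.1 hx).2 (mem_filter.1 hy).2
  · obtain ⟨x, hx⟩ := hne i
    exact ⟨⟨x, mem_range.1 (hsub i hx)⟩, by simpa [π] using hx⟩
  · have hπ : J.biUnion (fun i => (π (D i)).biUnion A) = (π (J.biUnion D)).biUnion A := by
      rw [← biUnion_biUnion]
      congr 1
      ext x
      simp [π]
    rw [hπ]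
    exact hcol J hJ

theorem stmt_5_general (n c : ℕ) :
    ∃ k, IsLeast {k | UProp n c k} k := by
  obtain ⟨k, hk⟩ := exists_isMonoUnionFamily_subset_range n (Fin c)
  have hne : {k | UProp n c k}.Nonempty := ⟨k, uProp_of_forall_exists_subset_range hk⟩
  exact ⟨sInf _, Nat.sInf_mem hne, fun _ => Nat.sInf_le⟩

theorem stmt_5 (n c : ℕ) (hn : 0 < n) (hc : 0 < c) :
    ∃ k, IsLeast {k | UProp n c k} k :=
  stmt_5_general n c
end

section
/- For all positive integers n and c, there exists a least integer k with the following property: whenever A₀ < A₁ < ... < A_{k-1} are nonempty finite subsets of ℕ (each Aᵢ entirely below A_{i+1}) and NU{A₀,...,A_{k-1}} is c-colored, there exist nonempty finite sets d₀ < d₁ < ... < d_{n-1}, each in NU{A₀,...,A_{k-1}}, such that NU{d₀,...,d_{n-1}} is monochromatic. (This least k is denoted Hind(n,c).) -/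
open Finset

/-- `A < B` for finite sets: every element of `A` is less than every element of `B`. -/
def FinsetLT (A B : Finset ℕ) : Prop := ∀ a ∈ A, ∀ b ∈ B, a < b

def HindProp (n c k : ℕ) : Prop :=
  ∀ A : Fin k → Finset ℕ, (∀ i, (A i).Nonempty) →
    (∀ i j : Fin k, i < j → FinsetLT (A i) (A j)) →
    ∀ chi : Finset ℕ → Fin c,
      ∃ d : Fin n → Finset ℕ,
        (∀ i, (d i).Nonempty) ∧
        (∀ i j : Fin n, i < j → FinsetLT (d i) (d j)) ∧
        (∀ i, ∃ I : Finset (Fin k), I.Nonempty ∧ d i = I.biUnion A) ∧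
        ∃ col : Fin c, ∀ J : Finset (Fin n), J.Nonempty → chi (J.biUnion d) = col

/-!
Hindman's theorem, applied to the finite sums of the singletons `{i}` in the free commutative
monoid `Multiset ℕ`, yields pairwise disjoint nonempty sets `b i` all of whose nonempty finite
unions have the same colour. Disjointness forces `min (b i) → ∞`, so a subsequence of the `b i`
consists of blocks `b (e 0) < b (e 1) < ⋯`. A compactness argument (an ultrafilter limit of
hypothetical counterexample colourings) bounds the first `n` blocks inside some `range k`.
Finally, ordered sets `A₀ < ⋯ < A_{k-1}` behave like the singletons `{0}, …, {k-1}`: colouring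
`S ⊆ range k` by the colour of `⋃_{j ∈ S} A j` transfers the result to `NU {A₀, …, A_{k-1}}`.
-/

theorem FinsetLT.trans {A B C : Finset ℕ} (hB : B.Nonempty) (hAB : FinsetLT A B)
    (hBC : FinsetLT B C) : FinsetLT A C := by
  obtain ⟨b, hb⟩ := hB
  exact fun x hx z hz => (hAB x hx b hb).trans (hBC b hb z hz)

theorem Multiset.toFinset_finset_sum {ι β : Type*} [DecidableEq ι] [DecidableEq β]
    (s : Finset ι) (f : ι → Multiset β) :
    (∑ i ∈ s, f i).toFinset = s.biUnion fun i => (f i).toFinset := by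
  induction s using Finset.induction_on with
  | empty => simp
  | insert i s hi ih => simp [sum_insert hi, Multiset.toFinset_add, ih]

namespace Hindman

theorem exists_finset_sum_of_mem_FS {M : Type*} [AddCommMonoid M] {a : Stream' M} {m : M}
    (hm : m ∈ FS a) : ∃ s : Finset ℕ, s.Nonempty ∧ m = ∑ i ∈ s, a.get i := by
  induction hm with
  | head' a => exact ⟨{0}, singleton_nonempty 0, by simp⟩
  | tail' a m _ ih =>
    obtain ⟨s, hs, rfl⟩ := ih
    exact ⟨s.map (addRightEmbedding 1), hs.map, by simp [sum_map, Stream'.get_tail]⟩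
  | cons' a m _ ih =>
    obtain ⟨s, -, rfl⟩ := ih
    refine ⟨insert 0 (s.map (addRightEmbedding 1)), insert_nonempty _ _, ?_⟩
    rw [sum_insert (by simp), sum_map]
    simp [Stream'.get_tail]

theorem exists_eq_val_of_mem_FS_singleton {m : Multiset ℕ} (hm : m ∈ FS fun i => {i}) :
    ∃ s : Finset ℕ, s.Nonempty ∧ m = s.val := by
  obtain ⟨s, hs, rfl⟩ := exists_finset_sum_of_mem_FS hm
  exact ⟨s, hs, sum_multiset_singleton s⟩

end Hindman

open Hindman Filter Function

theorem exists_pairwise_disjoint_monochromatic_biUnion {α : Type*} [Finite α]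
    (chi : Finset ℕ → α) :
    ∃ b : ℕ → Finset ℕ, (∀ i, (b i).Nonempty) ∧ Pairwise (Disjoint on b) ∧
      ∃ col, ∀ s : Finset ℕ, s.Nonempty → chi (s.biUnion b) = col := by
  set a : Stream' (Multiset ℕ) := fun i => {i}
  obtain ⟨_, ⟨col, rfl⟩, b, hb⟩ := FS_partition_regular a
    (Set.range fun col => {m | m ∈ FS a ∧ chi m.toFinset = col}) (Set.finite_range _)
    (fun m hm => Set.mem_sUnion.2 ⟨_, ⟨_, rfl⟩, hm, rfl⟩)
  have hnodup : ∀ m ∈ FS b, m ≠ 0 ∧ m.Nodup := fun m hm => by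
    obtain ⟨s, hs, rfl⟩ := exists_eq_val_of_mem_FS_singleton (hb hm).1
    exact ⟨by simpa using hs.ne_empty, s.nodup⟩
  refine ⟨fun i => (b.get i).toFinset, fun i => ?_, ?_, col, fun s hs => ?_⟩
  · simpa using (hnodup _ (FS.singleton b i)).1
  · refine (pairwise_disjoint_on _).2 fun i j hij => Multiset.disjoint_toFinset.2 ?_
    exact Multiset.disjoint_of_nodup_add (hnodup _ (FS.add_two b i j hij)).2
  · rw [← Multiset.toFinset_finset_sum]
    exact (hb (FS.finsetSum b s hs)).2

theorem exists_seq_finsetLT_of_pairwise_disjoint {b : ℕ → Finset ℕ}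
    (hne : ∀ i, (b i).Nonempty) (hdisj : Pairwise (Disjoint on b)) :
    ∃ e : ℕ → ℕ, ∀ i j, i < j → FinsetLT (b (e i)) (b (e j)) := by
  have hmin : Tendsto (fun i => (b i).min' (hne i)) atTop atTop := by
    refine Nat.cofinite_eq_atTop ▸ Injective.tendsto_cofinite fun i j hij => ?_
    by_contra hij'
    exact disjoint_left.1 (hdisj hij') (min'_mem _ _) (hij.symm ▸ min'_mem _ _)
  have hnext : ∀ i, ∃ j, FinsetLT (b i) (b j) := fun i => by
    obtain ⟨j, hj⟩ := (hmin.eventually_gt_atTop ((b i).max' (hne i))).exists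
    exact ⟨j, fun x hx y hy => (le_max' _ x hx).trans_lt (hj.trans_le (min'_le _ y hy))⟩
  choose F hF using hnext
  let r : ℕ → ℕ → Prop := fun i j => FinsetLT (b i) (b j)
  have : IsTrans ℕ r := ⟨fun i j l hij hjl => hij.trans (hne j) hjl⟩
  refine ⟨fun k => F^[k] 0, fun i j hij => Nat.rel_of_forall_rel_succ_of_lt r
    (f := fun k => F^[k] 0) (fun k => ?_) hij⟩
  simpa only [r, iterate_succ_apply'] using hF _

structure IsMonochromaticBlocks {α ι : Type*} [LinearOrder ι] (chi : Finset ℕ → α)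
    (d : ι → Finset ℕ) : Prop where
  nonempty : ∀ i, (d i).Nonempty
  finsetLT : ∀ i j, i < j → FinsetLT (d i) (d j)
  exists_color : ∃ col, ∀ J : Finset ι, J.Nonempty → chi (J.biUnion d) = col

theorem IsMonochromaticBlocks.comp_strictMono {α ι κ : Type*} [LinearOrder ι] [LinearOrder κ]
    {chi : Finset ℕ → α} {d : ι → Finset ℕ} (hd : IsMonochromaticBlocks chi d) {f : κ → ι}
    (hf : StrictMono f) : IsMonochromaticBlocks chi (d ∘ f) where
  nonempty i := hd.nonempty (f i)
  finsetLT i j hij := hd.finsetLT _ _ (hf hij)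
  exists_color := by
    obtain ⟨col, hcol⟩ := hd.exists_color
    exact ⟨col, fun J hJ => by simpa [image_biUnion, comp_def] using hcol _ (hJ.image f)⟩

theorem IsMonochromaticBlocks.congr_color {α ι : Type*} [LinearOrder ι]
    {chi chi' : Finset ℕ → α} {d : ι → Finset ℕ} (hd : IsMonochromaticBlocks chi d)
    (h : ∀ J : Finset ι, chi' (J.biUnion d) = chi (J.biUnion d)) :
    IsMonochromaticBlocks chi' d where
  nonempty := hd.nonempty
  finsetLT := hd.finsetLT
  exists_color := by
    obtain ⟨col, hcol⟩ := hd.exists_color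
    exact ⟨col, fun J hJ => (h J).trans (hcol J hJ)⟩

theorem exists_isMonochromaticBlocks_nat {α : Type*} [Finite α] (chi : Finset ℕ → α) :
    ∃ d : ℕ → Finset ℕ, IsMonochromaticBlocks chi d := by
  obtain ⟨b, hne, hdisj, col, hcol⟩ := exists_pairwise_disjoint_monochromatic_biUnion chi
  obtain ⟨e, hlt⟩ := exists_seq_finsetLT_of_pairwise_disjoint hne hdisj
  refine ⟨b ∘ e, fun i => hne _, hlt, col, fun J hJ => ?_⟩
  simpa [image_biUnion, comp_def] using hcol _ (hJ.image e)

theorem exists_range_isMonochromaticBlocks (n : ℕ) (α : Type*) [Finite α] :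
    ∃ k, ∀ chi : Finset ℕ → α,
      ∃ d : Fin n → Finset ℕ, (∀ i, d i ⊆ range k) ∧ IsMonochromaticBlocks chi d := by
  by_contra! hbad
  choose chi hchi using hbad
  let U := Ultrafilter.of (atTop : Filter ℕ)
  have hlim : ∀ S, ∃ col, ∀ᶠ k in U, chi k S = col := fun S => by
    obtain ⟨col, hcol⟩ := (U.map fun k => chi k S).eq_pure_of_finite
    have : ({col} : Set α) ∈ U.map fun k => chi k S := hcol ▸ Ultrafilter.mem_pure.2 rfl
    exact ⟨col, Ultrafilter.mem_map.1 this⟩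
  choose Chi hChi using hlim
  obtain ⟨d, hd⟩ := exists_isMonochromaticBlocks_nat Chi
  let D : Fin n → Finset ℕ := d ∘ Fin.val
  obtain ⟨m, hm⟩ := exists_nat_subset_range (univ.biUnion D)
  have hagree : ∀ᶠ k in U, ∀ J : Finset (Fin n), chi k (J.biUnion D) = Chi (J.biUnion D) :=
    eventually_all.2 fun J => hChi _
  obtain ⟨k, hk, hmk⟩ := (hagree.and (Ultrafilter.of_le _ (eventually_ge_atTop m))).exists
  refine hchi k D (fun i => ?_) ((hd.comp_strictMono Fin.val_strictMono).congr_color hk)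
  exact ((subset_biUnion_of_mem _ (mem_univ i)).trans hm).trans (range_subset_range.2 hmk)

theorem hindProp_of_forall_exists_isMonochromaticBlocks {n c k : ℕ}
    (hk : ∀ chi : Finset ℕ → Fin c,
      ∃ d : Fin n → Finset ℕ, (∀ i, d i ⊆ range k) ∧ IsMonochromaticBlocks chi d) :
    HindProp n c k := by
  intro A hA hAlt chi
  let g : ℕ → Finset ℕ := extend Fin.val A fun _ => ∅
  have hg (T : Finset (Fin k)) : (T.image Fin.val).biUnion g = T.biUnion A := by
    simp [g, image_biUnion, Fin.val_injective.extend_apply]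
  obtain ⟨D, hDk, hD⟩ := hk fun S => chi (S.biUnion g)
  obtain ⟨col, hcol⟩ := hD.exists_color
  let I i := (D i).attachFin fun _ hm => mem_range.1 (hDk i hm)
  have hDI i : D i = (I i).image Fin.val := (image_val_attachFin _).symm
  have hI i : (I i).Nonempty := by simpa [hDI] using hD.nonempty i
  refine ⟨fun i => (I i).biUnion A, fun i => ?_, fun i j hij => ?_,
    fun i => ⟨I i, hI i, rfl⟩, col, fun J hJ => ?_⟩
  · obtain ⟨p, hp⟩ := hI i
    exact biUnion_nonempty.2 ⟨p, hp, hA p⟩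
  · intro x hx y hy
    obtain ⟨p, hp, hxp⟩ := mem_biUnion.1 hx
    obtain ⟨q, hq, hyq⟩ := mem_biUnion.1 hy
    have hpq : p < q := hD.finsetLT i j hij p ((mem_attachFin _).1 hp) q ((mem_attachFin _).1 hq)
    exact hAlt p q hpq x hxp y hyq
  · have hunion : J.biUnion D = (J.biUnion I).image Fin.val := by
      simp only [biUnion_image, ← hDI]
    simpa [biUnion_biUnion, hunion, hg] using hcol J hJ

theorem stmt_6_general (n c : ℕ) :
    ∃ k, IsLeast {k | HindProp n c k} k := by
  obtain ⟨k, hk⟩ := exists_range_isMonochromaticBlocks n (Fin c)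
  exact ⟨_, isLeast_csInf ⟨k, hindProp_of_forall_exists_isMonochromaticBlocks hk⟩⟩

theorem stmt_6 (n c : ℕ) (hn : 0 < n) (hc : 0 < c) :
    ∃ k, IsLeast {k | HindProp n c k} k :=
  stmt_6_general n c
end
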